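/- Let α be a homeomorphism of ℝ, τ ∈ C_b(ℝ), and W = (w_j)_{j∈ℤ} a sequence in C_b(ℝ) with sup_j ‖w_j‖_∞ < ∞. Then the weighted shift T_{α,W}, defined on sequences s = (s_j)_{j∈ℤ} by (T_{α,W}(s))_{j+1} := w_{j+1} · (s_j ∘ α), maps the space c₀^{𝒜,τ} into itself, and satisfies ‖(T_{α,W}(s))_{j+1}‖_{τ∘α^{j+1}} ≤ (sup_k ‖w_k‖_∞) · ‖s_j‖_{τ∘α^j} for all j ∈ ℤ. -/
import Mathlib


open Filter

/-- `f` belongs to the Segal algebra `𝒜_σ`. -/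
def MemSegal (σ f : ℝ → ℝ) : Prop :=
  Continuous f ∧ Tendsto f (cocompact ℝ) (nhds 0) ∧
    Summable (fun n : ℕ => ⨆ x : ℝ, |f x * σ x ^ n|)

/-- The Segal norm `‖f‖_σ`. -/
noncomputable def segalNorm (σ f : ℝ → ℝ) : ℝ :=
  ∑' n : ℕ, ⨆ x : ℝ, |f x * σ x ^ n|

/-- The weight `τ ∘ α^j` for `j ∈ ℤ`. -/
noncomputable def tauIter (α : ℝ ≃ₜ ℝ) (τ : ℝ → ℝ) (j : ℤ) : ℝ → ℝ :=
  fun x => τ ((α.toEquiv ^ j) x)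

/-- Membership in `c₀^{𝒜,τ}`: each component lies in `𝒜_{τ∘α^j}` and the norms tend
to `0` as `|j| → ∞`. -/
def MemC0Seq (α : ℝ ≃ₜ ℝ) (τ : ℝ → ℝ) (s : ℤ → ℝ → ℝ) : Prop :=
  (∀ j : ℤ, MemSegal (tauIter α τ j) (s j)) ∧
    Tendsto (fun j : ℤ => segalNorm (tauIter α τ j) (s j)) cofinite (nhds 0)

/-- A continuous function vanishing at infinity is bounded. -/
lemma exists_bound_of_c0 (f : ℝ → ℝ) (hc : Continuous f)
    (h0 : Tendsto f (cocompact ℝ) (nhds 0)) : ∃ M, ∀ x, |f x| ≤ M := by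
  obtain ⟨K, hK, hKs⟩ := mem_cocompact.mp (h0 (Metric.closedBall_mem_nhds 0 one_pos))
  obtain ⟨M, hM⟩ := hK.exists_bound_of_continuousOn hc.continuousOn
  refine ⟨max M 1, fun x => ?_⟩
  by_cases hx : x ∈ K
  · exact le_max_of_le_left (by simpa [Real.norm_eq_abs] using hM x hx)
  · have hx' : f x ∈ Metric.closedBall (0 : ℝ) 1 := hKs hx
    rw [Metric.mem_closedBall, Real.dist_0_eq_abs] at hx'
    exact le_max_of_le_right hx'

lemma tauIter_succ (α : ℝ ≃ₜ ℝ) (τ : ℝ → ℝ) (j : ℤ) (x : ℝ) :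
    tauIter α τ (j + 1) x = tauIter α τ j (α x) := by
  simp only [tauIter, zpow_add_one, Equiv.Perm.mul_apply]
  rfl

/-- The weighted shift `(T_{α,W}(s))_{j+1} = w_{j+1}·(s_j ∘ α)` maps
`c₀^{𝒜,τ}` into itself, with
`‖(T_{α,W}(s))_{j+1}‖_{τ∘α^{j+1}} ≤ (sup_k ‖w_k‖_∞)·‖s_j‖_{τ∘α^j}`. -/
theorem weighted_shift_self_map_c0 (α : ℝ ≃ₜ ℝ) (τ : ℝ → ℝ)
    (hτc : Continuous τ) (hτb : ∃ C, ∀ x, |τ x| ≤ C)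
    (w : ℤ → ℝ → ℝ) (hwc : ∀ j, Continuous (w j))
    (hwb : ∃ C, ∀ j x, |w j x| ≤ C) :
    ∀ s : ℤ → ℝ → ℝ, MemC0Seq α τ s →
      MemC0Seq α τ (fun j => fun x => w j x * s (j - 1) (α x)) ∧
        ∀ j : ℤ,
          segalNorm (tauIter α τ (j + 1)) (fun x => w (j + 1) x * s j (α x)) ≤
            (⨆ k : ℤ, ⨆ x : ℝ, |w k x|) * segalNorm (tauIter α τ j) (s j) := by
  obtain ⟨Cτ, hCτ⟩ := hτb
  obtain ⟨Cw, hCw⟩ := hwb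
  have hCτ0 : 0 ≤ Cτ := le_trans (abs_nonneg _) (hCτ 0)
  set W : ℝ := ⨆ k : ℤ, ⨆ x : ℝ, |w k x| with hWdef
  -- basic facts about W
  have hbddw : ∀ k : ℤ, BddAbove (Set.range fun x => |w k x|) :=
    fun k => ⟨Cw, by rintro _ ⟨x, rfl⟩; exact hCw k x⟩
  have hbddW : BddAbove (Set.range fun k : ℤ => ⨆ x : ℝ, |w k x|) :=
    ⟨Cw, by rintro _ ⟨k, rfl⟩; exact ciSup_le fun x => hCw k x⟩
  have hW : ∀ k x, |w k x| ≤ W := fun k x =>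
    le_trans (le_ciSup (hbddw k) x) (le_ciSup hbddW k)
  have hW0 : 0 ≤ W := le_trans (abs_nonneg _) (hW 0 0)
  -- bound on tauIter
  have hτib : ∀ (j : ℤ) (x : ℝ), |tauIter α τ j x| ≤ Cτ := fun j x => hCτ _
  intro s hs
  -- bounds for every component
  have hsb : ∀ j : ℤ, ∃ M, ∀ x, |s j x| ≤ M := fun j =>
    exists_bound_of_c0 (s j) (hs.1 j).1 (hs.1 j).2.1
  -- BddAbove for the sup terms of each component
  have hbdds : ∀ (j : ℤ) (n : ℕ),
      BddAbove (Set.range fun x : ℝ => |s j x * tauIter α τ j x ^ n|) := by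
    intro j n
    obtain ⟨M, hM⟩ := hsb j
    refine ⟨M * Cτ ^ n, ?_⟩
    rintro _ ⟨x, rfl⟩
    dsimp only
    rw [abs_mul, abs_pow]
    exact mul_le_mul (hM x) (pow_le_pow_left₀ (abs_nonneg _) (hτib j x) n)
      (pow_nonneg (abs_nonneg _) n) (le_trans (abs_nonneg _) (hM 0))
  -- nonnegativity of sup terms
  have hnn : ∀ (σ g : ℝ → ℝ) (n : ℕ), (0 : ℝ) ≤ ⨆ x : ℝ, |g x * σ x ^ n| :=
    fun σ g n => Real.iSup_nonneg fun x => abs_nonneg _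
  have hsegnn : ∀ σ g : ℝ → ℝ, 0 ≤ segalNorm σ g :=
    fun σ g => tsum_nonneg fun n => hnn σ g n
  -- the key per-n bound
  have key : ∀ (j : ℤ) (n : ℕ),
      (⨆ x : ℝ, |(w (j + 1) x * s j (α x)) * tauIter α τ (j + 1) x ^ n|) ≤
        W * ⨆ x : ℝ, |s j x * tauIter α τ j x ^ n| := by
    intro j n
    refine ciSup_le fun x => ?_
    have h1 : |(w (j + 1) x * s j (α x)) * tauIter α τ (j + 1) x ^ n| =
        |w (j + 1) x| * |s j (α x) * tauIter α τ j (α x) ^ n| := by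
      rw [tauIter_succ, mul_assoc, abs_mul]
    rw [h1]
    exact mul_le_mul (hW _ x) (le_ciSup (hbdds j n) (α x)) (abs_nonneg _) hW0
  -- MemSegal of each shifted component (stated for index j+1)
  have memSeg : ∀ j : ℤ, MemSegal (tauIter α τ (j + 1))
      (fun x => w (j + 1) x * s j (α x)) := by
    intro j
    refine ⟨(hwc (j + 1)).mul ((hs.1 j).1.comp α.continuous), ?_, ?_⟩
    · -- vanishing at infinity
      have hα : Tendsto (⇑α) (cocompact ℝ) (cocompact ℝ) := by
        exact le_of_eq α.map_cocompact
      have hg : Tendsto (fun x => s j (α x)) (cocompact ℝ) (nhds 0) :=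
        (hs.1 j).2.1.comp hα
      have hg' : Tendsto (fun x => Cw * |s j (α x)|) (cocompact ℝ) (nhds 0) := by
        have := (hg.abs).const_mul Cw
        simpa using this
      refine squeeze_zero_norm (fun x => ?_) hg'
      rw [Real.norm_eq_abs, abs_mul]
      exact mul_le_mul_of_nonneg_right (hCw _ x) (abs_nonneg _)
    · -- summability
      refine Summable.of_nonneg_of_le (fun n => hnn _ _ n) (fun n => key j n) ?_
      exact ((hs.1 j).2.2).mul_left W
  -- segalNorm bound
  have normBound : ∀ j : ℤ,
      segalNorm (tauIter α τ (j + 1)) (fun x => w (j + 1) x * s j (α x)) ≤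
        W * segalNorm (tauIter α τ j) (s j) := by
    intro j
    have hsum1 : Summable (fun n : ℕ =>
        ⨆ x : ℝ, |(w (j + 1) x * s j (α x)) * tauIter α τ (j + 1) x ^ n|) :=
      (memSeg j).2.2
    have hsum2 : Summable (fun n : ℕ =>
        W * ⨆ x : ℝ, |s j x * tauIter α τ j x ^ n|) := ((hs.1 j).2.2).mul_left W
    calc segalNorm (tauIter α τ (j + 1)) (fun x => w (j + 1) x * s j (α x))
        ≤ ∑' n : ℕ, W * ⨆ x : ℝ, |s j x * tauIter α τ j x ^ n| :=
          Summable.tsum_le_tsum (fun n => key j n) hsum1 hsum2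
      _ = W * segalNorm (tauIter α τ j) (s j) := tsum_mul_left
  refine ⟨⟨?_, ?_⟩, normBound⟩
  · intro j
    have := memSeg (j - 1)
    simpa using this
  · -- cofinite tendsto
    have hshift : Tendsto (fun j : ℤ => j - 1) cofinite cofinite :=
      Function.Injective.tendsto_cofinite
        (f := fun j : ℤ => j - 1) (fun a b h => by simpa using h)
    have h1 : Tendsto (fun j : ℤ => W * segalNorm (tauIter α τ (j - 1)) (s (j - 1)))
        cofinite (nhds 0) := by
      have := (hs.2.comp hshift).const_mul W
      simpa using this
    refine squeeze_zero (fun j => hsegnn _ _) (fun j => ?_) h1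
    have := normBound (j - 1)
    simpa using this
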